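/- arXiv:1703.08427 — 6 statements merged into one kernel-verified Lean document; each statement's English description precedes it below -/
import Mathlib

section
/- Let (n_i)_{i∈ℕ} and (m_i)_{i∈ℕ} be sequences of positive integers. The abelian groups ∏_{i∈ℕ} ℤ/n_iℤ and ∏_{i∈ℕ} ℤ/m_iℤ are isomorphic if and only if for every prime ℓ and every integer k ≥ 1 the sets {i ∈ ℕ : ℓ^k exactly divides n_i} and {i ∈ ℕ : ℓ^k exactly divides m_i} have the same cardinality (i.e., are both infinite or are finite of equal size). -/
/-!
For a prime `ℓ` and `j ≥ 0`, the quotient `(ℓ^j G)[ℓ] / (ℓ^(j+1) G)[ℓ]` is an isomorphism invariant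
of an abelian group `G` (its Ulm invariant). For `G = ∏ ℤ/n_iℤ` it is computed factorwise: the
factor `ℤ/nℤ` contributes `ℤ/ℓℤ` exactly when `ℓ^(j+1)` exactly divides `n`, so the invariant has
cardinality `ℓ ^ κ` with `κ` the number of such indices. Since `κ ≤ ℵ₀` and `ℓ ^ ℵ₀ = 𝔠 > ℵ₀`,
`κ` can be read off from `ℓ ^ κ`. Conversely, the Chinese remainder theorem splits every
`ℤ/n_iℤ` into its primary parts, so `∏ ℤ/n_iℤ ≅ ∏_{ℓ, k} (ℤ/ℓ^kℤ)^{κ_{ℓ,k}}`, which depends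
only on the cardinals `κ_{ℓ,k}`.
-/

open Cardinal

universe u

namespace Cardinal

lemma prod_ite_one_eq_power {ι : Type u} (P : ι → Prop) [DecidablePred P] (c : Cardinal.{u}) :
    (prod fun i => if P i then c else 1) = c ^ #{i // P i} := by
  have hfactor (i : ι) : (if P i then c else 1) = c ^ #(ULift.{u} (PLift (P i))) := by
    split_ifs with h <;> simp [h]
  rw [funext hfactor, ← power_sum, ← mk_sigma,
    mk_congr ((Equiv.sigmaCongrRight fun _ => Equiv.ulift).trans (Equiv.sigmaPLiftEquivSubtype P))]

lemma natCast_power_lt_aleph0_iff {c : ℕ} (hc : 2 ≤ c) {a : Cardinal} (ha : a ≤ ℵ₀) :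
    (c : Cardinal) ^ a < ℵ₀ ↔ a < ℵ₀ := by
  refine ⟨fun h => ha.lt_of_ne ?_, power_lt_aleph0 natCast_lt_aleph0⟩
  rintro rfl
  rw [nat_power_aleph0 hc] at h
  exact h.not_gt aleph0_lt_continuum

lemma natCast_power_inj_of_le_aleph0 {c : ℕ} (hc : 2 ≤ c) {a b : Cardinal} (ha : a ≤ ℵ₀)
    (hb : b ≤ ℵ₀) (h : (c : Cardinal) ^ a = (c : Cardinal) ^ b) : a = b := by
  have hfin : a < ℵ₀ ↔ b < ℵ₀ := by
    rw [← natCast_power_lt_aleph0_iff hc ha, ← natCast_power_lt_aleph0_iff hc hb, h]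
  by_cases ha' : a < ℵ₀
  · obtain ⟨a, rfl⟩ := lt_aleph0.mp ha'
    obtain ⟨b, rfl⟩ := lt_aleph0.mp (hfin.mp ha')
    rw [power_natCast, power_natCast, ← Nat.cast_pow, ← Nat.cast_pow, Nat.cast_inj] at h
    exact congrArg _ (Nat.pow_right_injective hc h)
  · rw [ha.antisymm (not_lt.mp ha'), hb.antisymm (not_lt.mp (hfin.not.mp ha'))]

end Cardinal

noncomputable def AddSubgroup.quotientAddSubgroupOfPiEquiv {ι : Type*} {G : ι → Type*}
    [∀ i, AddGroup (G i)] (A B : ∀ i, AddSubgroup (G i)) :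
    (pi Set.univ A ⧸ (pi Set.univ B).addSubgroupOf (pi Set.univ A)) ≃
      ∀ i, A i ⧸ (B i).addSubgroupOf (A i) :=
  (Quotient.congr (ra := QuotientAddGroup.leftRel _)
      (rb := @piSetoid _ _ fun i => QuotientAddGroup.leftRel ((B i).addSubgroupOf (A i)))
      ((Equiv.subtypeEquivRight fun _ => by simp [mem_pi]).trans Equiv.subtypePiEquivPi)
      fun x y => by
        simp only [QuotientAddGroup.leftRel_apply, Setoid.piSetoid_apply, mem_addSubgroupOf,
          mem_pi, Set.mem_univ, forall_const]
        rfl).trans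
    (Setoid.piQuotientEquiv _).symm

section Ulm

variable {G H : Type*} [AddCommGroup G] [AddCommGroup H] {ℓ j : ℕ}

variable (G ℓ j) in
def ulmSubgroup : AddSubgroup G :=
  (nsmulAddMonoidHom (ℓ ^ j)).range ⊓ AddSubgroup.torsionBy G ℓ

variable (G ℓ j) in
abbrev ulmQuotient : Type _ :=
  ulmSubgroup G ℓ j ⧸ (ulmSubgroup G ℓ (j + 1)).addSubgroupOf (ulmSubgroup G ℓ j)

lemma mem_ulmSubgroup {x : G} : x ∈ ulmSubgroup G ℓ j ↔ (∃ y, ℓ ^ j • y = x) ∧ ℓ • x = 0 := by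
  simp [ulmSubgroup]

lemma ulmSubgroup_succ_le : ulmSubgroup G ℓ (j + 1) ≤ ulmSubgroup G ℓ j := by
  intro x hx
  obtain ⟨⟨y, rfl⟩, hx⟩ := mem_ulmSubgroup.mp hx
  exact mem_ulmSubgroup.mpr ⟨⟨ℓ • y, by rw [← mul_nsmul', pow_succ]⟩, hx⟩

lemma map_ulmSubgroup (e : G ≃+ H) :
    (ulmSubgroup G ℓ j).map e.toAddMonoidHom = ulmSubgroup H ℓ j := by
  ext x
  simp only [AddSubgroup.mem_map, mem_ulmSubgroup, AddEquiv.coe_toAddMonoidHom]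
  constructor
  · rintro ⟨x, ⟨⟨y, rfl⟩, hx⟩, rfl⟩
    exact ⟨⟨e y, (map_nsmul e _ y).symm⟩, by rw [← map_nsmul, hx, map_zero]⟩
  · rintro ⟨⟨y, rfl⟩, hx⟩
    refine ⟨e.symm (ℓ ^ j • y), ⟨⟨e.symm y, (map_nsmul e.symm _ y).symm⟩, ?_⟩,
      e.apply_symm_apply _⟩
    rw [← map_nsmul, hx, map_zero]

noncomputable def ulmQuotientCongr (e : G ≃+ H) : ulmQuotient G ℓ j ≃+ ulmQuotient H ℓ j := by
  refine QuotientAddGroup.congr _ _ ((e.addSubgroupMap _).trans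
    (AddEquiv.addSubgroupCongr (map_ulmSubgroup e))) ?_
  ext ⟨x, hx⟩
  simp only [AddSubgroup.mem_map, AddSubgroup.mem_addSubgroupOf,
    ← map_ulmSubgroup e (j := j + 1)]
  constructor
  · rintro ⟨⟨a, ha⟩, hsucc, hax⟩
    exact ⟨a, hsucc, congrArg Subtype.val hax⟩
  · rintro ⟨a, hsucc, rfl⟩
    exact ⟨⟨a, ulmSubgroup_succ_le hsucc⟩, hsucc, rfl⟩

lemma ulmSubgroup_pi {ι : Type*} (G : ι → Type*) [∀ i, AddCommGroup (G i)] :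
    ulmSubgroup (∀ i, G i) ℓ j = AddSubgroup.pi Set.univ fun i => ulmSubgroup (G i) ℓ j := by
  ext x
  simp [mem_ulmSubgroup, AddSubgroup.mem_pi, funext_iff, Classical.skolem, forall_and]

end Ulm

namespace ZMod

variable {ℓ N j : ℕ}

lemma exists_eq_nsmul_of_nsmul_eq_zero [NeZero N] (hℓN : ℓ ∣ N) {x : ZMod N} (hx : ℓ • x = 0) :
    ∃ c : ℕ, x = c • ((N / ℓ : ℕ) : ZMod N) := by
  have hℓ : 0 < ℓ := Nat.pos_of_dvd_of_pos hℓN (Nat.pos_of_neZero N)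
  have hN : N ∣ ℓ * x.val := by
    rw [← ZMod.natCast_eq_zero_iff, Nat.cast_mul, ZMod.natCast_val, ZMod.cast_id,
      ← nsmul_eq_mul, hx]
  obtain ⟨c, hc⟩ := (Nat.div_dvd_iff_dvd_mul hℓN hℓ).mpr hN
  refine ⟨c, ?_⟩
  rw [nsmul_eq_mul, ← Nat.cast_mul, mul_comm, ← hc, ZMod.natCast_val, ZMod.cast_id]

lemma torsionBy_eq_zmultiples [NeZero N] (hℓN : ℓ ∣ N) :
    AddSubgroup.torsionBy (ZMod N) ℓ = AddSubgroup.zmultiples ((N / ℓ : ℕ) : ZMod N) := by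
  ext x
  rw [AddSubgroup.torsionBy.nsmul_iff]
  constructor
  · intro hx
    obtain ⟨c, rfl⟩ := exists_eq_nsmul_of_nsmul_eq_zero hℓN hx
    exact AddSubgroup.nsmul_mem_zmultiples _ c
  · rintro ⟨c, rfl⟩
    rw [smul_comm, nsmul_eq_mul, ← Nat.cast_mul, Nat.mul_div_cancel' hℓN, ZMod.natCast_self,
      smul_zero]

lemma card_torsionBy [NeZero N] (hℓN : ℓ ∣ N) :
    Nat.card (AddSubgroup.torsionBy (ZMod N) ℓ) = ℓ := by
  have hN := NeZero.ne N
  rw [torsionBy_eq_zmultiples hℓN, Nat.card_zmultiples, ZMod.addOrderOf_coe _ hN,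
    Nat.gcd_eq_right (Nat.div_dvd_of_dvd hℓN), Nat.div_div_self hℓN hN]

lemma ulmSubgroup_eq_torsionBy [NeZero N] (h : ℓ ^ (j + 1) ∣ N) :
    ulmSubgroup (ZMod N) ℓ j = AddSubgroup.torsionBy (ZMod N) ℓ := by
  refine le_antisymm inf_le_right fun x hx => ?_
  have hℓN : ℓ ∣ N := (dvd_pow_self ℓ j.succ_ne_zero).trans h
  rw [AddSubgroup.torsionBy.nsmul_iff] at hx
  obtain ⟨c, rfl⟩ := exists_eq_nsmul_of_nsmul_eq_zero hℓN hx
  refine mem_ulmSubgroup.mpr ⟨⟨c • ((N / ℓ ^ (j + 1) : ℕ) : ZMod N), ?_⟩, hx⟩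
  have hℓ : 0 < ℓ := Nat.pos_of_dvd_of_pos hℓN (Nat.pos_of_neZero N)
  have hdiv : ℓ ^ j * (N / ℓ ^ (j + 1)) = N / ℓ := by
    rw [← Nat.mul_div_assoc _ h, pow_succ, Nat.mul_div_mul_left N ℓ (pow_pos hℓ j)]
  rw [smul_comm, ← hdiv, Nat.cast_mul, ← nsmul_eq_mul]

lemma ulmSubgroup_eq_bot (hℓ : ℓ.Prime) (h : ¬ ℓ ^ (j + 1) ∣ N) :
    ulmSubgroup (ZMod N) ℓ j = ⊥ := by
  refine eq_bot_iff.mpr fun x hx => ?_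
  obtain ⟨⟨y, rfl⟩, hx⟩ := mem_ulmSubgroup.mp hx
  have hN : addOrderOf y ∣ N := addOrderOf_dvd_of_nsmul_eq_zero (by simp)
  have hℓj : addOrderOf y ∣ ℓ ^ (j + 1) :=
    addOrderOf_dvd_of_nsmul_eq_zero (by rw [pow_succ, mul_nsmul, hx])
  obtain ⟨s, hs, hys⟩ := (Nat.dvd_prime_pow hℓ).mp hℓj
  have : s ≠ j + 1 := by rintro rfl; exact h (hys ▸ hN)
  rw [AddSubgroup.mem_bot, ← addOrderOf_dvd_iff_nsmul_eq_zero, hys]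
  exact pow_dvd_pow ℓ (by omega)

lemma mk_ulmQuotient [NeZero N] (hℓ : ℓ.Prime) :
    #(ulmQuotient (ZMod N) ℓ j) =
      if ℓ ^ (j + 1) ∣ N ∧ ¬ ℓ ^ (j + 1 + 1) ∣ N then (ℓ : Cardinal) else 1 := by
  split_ifs with hexact
  · rw [ulmQuotient, ulmSubgroup_eq_torsionBy hexact.1, ulmSubgroup_eq_bot hℓ hexact.2,
      AddSubgroup.bot_addSubgroupOf, mk_congr QuotientAddGroup.quotientBot.toEquiv,
      ← Nat.cast_card, card_torsionBy ((dvd_pow_self ℓ j.succ_ne_zero).trans hexact.1)]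
  · refine Cardinal.eq_one_iff_unique.mpr ⟨?_, inferInstance⟩
    by_cases hdvd : ℓ ^ (j + 1) ∣ N
    · rw [ulmQuotient, ulmSubgroup_eq_torsionBy hdvd, ulmSubgroup_eq_torsionBy (by tauto),
        AddSubgroup.addSubgroupOf_self]
      exact QuotientAddGroup.subsingleton_quotient_top
    · rw [ulmQuotient, ulmSubgroup_eq_bot hℓ hdvd]
      exact inferInstanceAs (Subsingleton (Quotient _))

end ZMod

abbrev exactDvdIndex {ι : Type*} (n : ι → ℕ+) (ℓ k : ℕ) : Type _ :=
  {i : ι // ℓ ^ k ∣ (n i : ℕ) ∧ ¬ ℓ ^ (k + 1) ∣ (n i : ℕ)}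

lemma mk_ulmQuotient_pi_zmod {ι : Type} (n : ι → ℕ+) {ℓ : ℕ} (hℓ : ℓ.Prime) (j : ℕ) :
    #(ulmQuotient (∀ i, ZMod (n i)) ℓ j) = ℓ ^ #(exactDvdIndex n ℓ (j + 1)) := by
  rw [ulmQuotient, ulmSubgroup_pi, ulmSubgroup_pi,
    mk_congr (AddSubgroup.quotientAddSubgroupOfPiEquiv _ _), mk_pi]
  simp only [ZMod.mk_ulmQuotient hℓ]
  rw [prod_ite_one_eq_power]

theorem mk_exactDvdIndex_eq_of_addEquiv {ι : Type} [Countable ι] {n m : ι → ℕ+}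
    (e : (∀ i, ZMod (n i)) ≃+ ∀ i, ZMod (m i)) {ℓ : ℕ} (hℓ : ℓ.Prime) (j : ℕ) :
    #(exactDvdIndex n ℓ (j + 1)) = #(exactDvdIndex m ℓ (j + 1)) := by
  refine natCast_power_inj_of_le_aleph0 hℓ.two_le mk_le_aleph0 mk_le_aleph0 ?_
  rw [← mk_ulmQuotient_pi_zmod n hℓ j, ← mk_ulmQuotient_pi_zmod m hℓ j]
  exact mk_congr (ulmQuotientCongr e).toEquiv

lemma Nat.factorization_eq_of_dvd_of_not_dvd {ℓ k N : ℕ} (hℓ : ℓ.Prime) (hN : N ≠ 0)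
    (h : ℓ ^ k ∣ N) (h' : ¬ ℓ ^ (k + 1) ∣ N) : N.factorization ℓ = k := by
  rw [hℓ.pow_dvd_iff_le_factorization hN] at h h'
  omega

abbrev PrimePowerIndex : Type := {q : ℕ × ℕ // q.1.Prime ∧ 1 ≤ q.2}

section PrimaryDecomposition

variable {ι : Type*} (n : ι → ℕ+)

def sigmaPrimeFactorsEquiv :
    (Σ i, (n i : ℕ).primeFactors) ≃ Σ q : PrimePowerIndex, exactDvdIndex n q.1.1 q.1.2 where
  toFun x :=
    have hp := Nat.prime_of_mem_primeFactors x.2.2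
    ⟨⟨(x.2, (n x.1 : ℕ).factorization x.2), hp,
        hp.factorization_pos_of_dvd (n x.1).ne_zero (Nat.dvd_of_mem_primeFactors x.2.2)⟩,
      ⟨x.1, Nat.ordProj_dvd _ _, Nat.pow_succ_factorization_not_dvd (n x.1).ne_zero hp⟩⟩
  invFun y :=
    ⟨y.2, y.1.1.1, Nat.mem_primeFactors.mpr ⟨y.1.2.1,
      (dvd_pow_self _ (by have := y.1.2.2; omega)).trans y.2.2.1, (n y.2).ne_zero⟩⟩
  left_inv _ := rfl
  right_inv := by
    rintro ⟨⟨⟨ℓ, k⟩, hℓ, hk⟩, ⟨i, hdvd, hndvd⟩⟩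
    dsimp only at hℓ hdvd hndvd
    obtain rfl := Nat.factorization_eq_of_dvd_of_not_dvd hℓ (n i).ne_zero hdvd hndvd
    rfl

noncomputable def primaryDecomposition :
    (∀ i, ZMod (n i)) ≃+
      ∀ q : PrimePowerIndex, exactDvdIndex n q.1.1 q.1.2 → ZMod (q.1.1 ^ q.1.2) :=
  (AddEquiv.piCongrRight fun i => (ZMod.equivPi _ (n i).ne_zero).toAddEquiv).trans <|
    (LinearEquiv.piCurry ℤ fun i (p : (n i : ℕ).primeFactors) =>
      ZMod ((p : ℕ) ^ (n i : ℕ).factorization p)).symm.toAddEquiv.trans <|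
    (LinearEquiv.piCongrLeft ℤ (fun y : Σ q : PrimePowerIndex, exactDvdIndex n q.1.1 q.1.2 =>
      ZMod (y.1.1.1 ^ y.1.1.2)) (sigmaPrimeFactorsEquiv n)).toAddEquiv.trans
    (LinearEquiv.piCurry ℤ fun (q : PrimePowerIndex) (_ : exactDvdIndex n q.1.1 q.1.2) =>
      ZMod (q.1.1 ^ q.1.2)).toAddEquiv

end PrimaryDecomposition

theorem nonempty_addEquiv_of_mk_exactDvdIndex_eq {ι : Type*} {n m : ι → ℕ+}
    (h : ∀ ℓ : ℕ, ℓ.Prime → ∀ k : ℕ, 1 ≤ k → #(exactDvdIndex n ℓ k) = #(exactDvdIndex m ℓ k)) :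
    Nonempty ((∀ i, ZMod (n i)) ≃+ ∀ i, ZMod (m i)) := by
  have e (q : PrimePowerIndex) : exactDvdIndex m q.1.1 q.1.2 ≃ exactDvdIndex n q.1.1 q.1.2 :=
    Classical.choice (Cardinal.eq.mp (h q.1.1 q.2.1 q.1.2 q.2.2).symm)
  exact ⟨(primaryDecomposition n).trans <| (AddEquiv.piCongrRight fun q =>
    (LinearEquiv.funCongrLeft ℤ _ (e q)).toAddEquiv).trans (primaryDecomposition m).symm⟩

/-- Let `(n_i)` and `(m_i)` be sequences of positive integers. The abelian
groups `∏_i ℤ/n_iℤ` and `∏_i ℤ/m_iℤ` are isomorphic if and only if for every prime `ℓ` and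
every `k ≥ 1`, the sets of indices `i` such that `ℓ^k` exactly divides `n_i` resp. `m_i` have
the same cardinality. -/
theorem statement3 (n m : ℕ → ℕ+) :
    Nonempty ((∀ i : ℕ, ZMod (n i)) ≃+ ∀ i : ℕ, ZMod (m i)) ↔
      ∀ ℓ : ℕ, ℓ.Prime → ∀ k : ℕ, 1 ≤ k →
        Cardinal.mk {i : ℕ // ℓ ^ k ∣ (n i : ℕ) ∧ ¬ ℓ ^ (k + 1) ∣ (n i : ℕ)} =
          Cardinal.mk {i : ℕ // ℓ ^ k ∣ (m i : ℕ) ∧ ¬ ℓ ^ (k + 1) ∣ (m i : ℕ)} := by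
  refine ⟨fun ⟨e⟩ ℓ hℓ k hk => ?_, nonempty_addEquiv_of_mk_exactDvdIndex_eq⟩
  obtain ⟨j, rfl⟩ : ∃ j, k = j + 1 := ⟨k - 1, by omega⟩
  exact mk_exactDvdIndex_eq_of_addEquiv e hℓ j
end

section
/- The abelian group ∏_{m=1}^∞ ℤ/mℤ (the product of the cyclic groups ℤ/mℤ over all positive integers m) is isomorphic to the abelian group ∏_p 𝔽_p^×, the product over all prime numbers p of the multiplicative groups of the finite prime fields 𝔽_p. -/
/-!
Both groups are countable products of finite cyclic groups `ℤ/nᵢ`, as `𝔽_p^× ≅ ℤ/(p - 1)`.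
By the Chinese remainder theorem each factor splits into its primary parts `ℤ/q^{v_q(nᵢ)}`, so
after regrouping by the exponent both become `∏_q ∏_k (ℤ/q^k)^ℕ`, provided every exponent
`k ≥ 1` occurs for infinitely many indices `i`. For the family `n = m` this is clear
(`m = q^k (1 + q t)`); for the family `n = p - 1` it is Dirichlet's theorem for the primes
`p ≡ 1 + q^k (mod q^{k+1})`.
-/

namespace AddEquiv

def piComm {ι κ : Type*} (M : ι → κ → Type*) [∀ i k, Add (M i k)] :
    (∀ i k, M i k) ≃+ ∀ k i, M i k :=
  { Equiv.piComm M with map_add' := fun _ _ => rfl }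

def piEquivPiFibers {ι κ : Type*} (v : ι → κ) (G : κ → Type*) [∀ k, Add (G k)] :
    (∀ i, G (v i)) ≃+ ∀ k, ({i // v i = k} → G k) where
  toFun f k i := i.2 ▸ f i
  invFun g i := g (v i) ⟨i, rfl⟩
  left_inv _ := rfl
  right_inv g := by ext k ⟨i, rfl⟩; rfl
  map_add' f g := by ext k ⟨i, rfl⟩; rfl

end AddEquiv

theorem nonempty_arrow_addEquiv_nat_arrow {α G : Type*} [Countable α] [AddCommMonoid G]
    (h : Infinite α ∨ Subsingleton G) : Nonempty ((α → G) ≃+ (ℕ → G)) := by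
  rcases h with h | h
  · obtain ⟨e⟩ : Nonempty (ℕ ≃ α) := nonempty_equiv_of_countable
    exact ⟨(LinearEquiv.funCongrLeft ℕ G e).toAddEquiv⟩
  · let : Unique (α → G) := uniqueOfSubsingleton 0
    let : Unique (ℕ → G) := uniqueOfSubsingleton 0
    exact ⟨AddEquiv.ofUnique⟩

noncomputable def ZMod.equivPiPrimes {n : ℕ} (hn : n ≠ 0) :
    ZMod n ≃+* ∀ q : Nat.Primes, ZMod ((q : ℕ) ^ n.factorization q) :=
  let R (q : Nat.Primes) : Type := ZMod ((q : ℕ) ^ n.factorization q)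
  let e : n.primeFactors ≃ {q : Nat.Primes // (q : ℕ) ∈ n.primeFactors} :=
    { toFun q := ⟨⟨q, Nat.prime_of_mem_primeFactors q.2⟩, q.2⟩
      invFun q := ⟨q.1, q.2⟩
      left_inv _ := rfl
      right_inv _ := rfl }
  have : ∀ q : {q : Nat.Primes // (q : ℕ) ∉ n.primeFactors}, Subsingleton (R q) := fun q => by
    dsimp only [R]
    rw [Finsupp.notMem_support_iff.mp (by rw [Nat.support_factorization]; exact q.2), pow_zero]
    infer_instance
  (ZMod.equivPi n hn).trans <| (RingEquiv.piCongrLeft (fun q => R q.1) e).trans <|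
    (RingEquiv.prodZeroRing _ _).trans (RingEquiv.piEquivPiSubtypeProd _ R).symm

theorem nonempty_additive_units_addEquiv_zmod (F : Type*) [Field F] [Finite F] :
    Nonempty (Additive Fˣ ≃+ ZMod (Nat.card F - 1)) :=
  ⟨addEquivOfAddCyclicCardEq <| by
    rw [Nat.card_zmod, Nat.card_congr Additive.toMul, Nat.card_units]⟩

theorem Nat.factorization_eq_of_mod_pow_succ_eq {n q k : ℕ} (hq : q.Prime)
    (h : n % q ^ (k + 1) = q ^ k) : n.factorization q = k := by
  have hqk : q ^ k ≠ 0 := pow_ne_zero k hq.ne_zero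
  have hn : n ≠ 0 := by
    rintro rfl
    exact hqk (by simpa using h.symm)
  have hdvd : q ^ k ∣ n := (Nat.dvd_mod_iff (pow_dvd_pow q k.le_succ)).mp (h ▸ dvd_rfl)
  have hndvd : ¬ q ^ (k + 1) ∣ n := by rwa [Nat.dvd_iff_mod_eq_zero, h]
  rw [hq.pow_dvd_iff_le_factorization hn] at hdvd hndvd
  omega

theorem PNat.infinite_setOf_factorization_eq {q : ℕ} (hq : q.Prime) (k : ℕ) :
    {m : ℕ+ | (m : ℕ).factorization q = k}.Infinite := by
  have hqk : 0 < q ^ k := pow_pos hq.pos k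
  refine Set.infinite_of_injective_forall_mem
    (f := fun t : ℕ => (⟨q ^ (k + 1) * t + q ^ k, by positivity⟩ : ℕ+)) (fun a b hab => ?_)
    fun t => Nat.factorization_eq_of_mod_pow_succ_eq hq ?_
  · simpa [hq.ne_zero] using congrArg PNat.val hab
  · simp [Nat.mod_eq_of_lt (Nat.pow_lt_pow_right hq.one_lt k.lt_succ_self)]

theorem Nat.Primes.infinite_setOf_factorization_sub_one_eq {q k : ℕ} (hq : q.Prime)
    (hk : k ≠ 0) :
    {p : Nat.Primes | ((p : ℕ) - 1).factorization q = k}.Infinite := by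
  have : NeZero (q ^ (k + 1)) := ⟨pow_ne_zero _ hq.ne_zero⟩
  have hunit : IsUnit ((1 + q ^ k : ℕ) : ZMod (q ^ (k + 1))) := by
    rw [ZMod.isUnit_iff_coprime]
    refine Nat.Coprime.pow_right _ ?_
    obtain ⟨j, rfl⟩ := Nat.exists_eq_succ_of_ne_zero hk
    simp [pow_succ]
  have hlt : 1 + q ^ k < q ^ (k + 1) := by
    have := Nat.one_lt_pow hk hq.one_lt
    rw [pow_succ]
    nlinarith [hq.two_le]
  refine Set.Infinite.of_image Subtype.val <|
    (Nat.infinite_setOfPred_prime_and_eq_mod hunit).mono ?_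
  rintro p ⟨hp, hpmod⟩
  refine ⟨⟨p, hp⟩, Nat.factorization_eq_of_mod_pow_succ_eq hq ?_, rfl⟩
  rw [ZMod.natCast_eq_natCast_iff', Nat.mod_eq_of_lt hlt] at hpmod
  have hdiv := Nat.div_add_mod p (q ^ (k + 1))
  have : p - 1 = q ^ (k + 1) * (p / q ^ (k + 1)) + q ^ k := by omega
  rw [this, Nat.mul_add_mod, Nat.mod_eq_of_lt (by omega)]

/-- The `k = 0` factors are trivial; keeping them avoids indexing by `k ≠ 0`. -/
abbrev PrimaryProduct : Type := ∀ (q : Nat.Primes) (k : ℕ), ℕ → ZMod ((q : ℕ) ^ k)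

theorem nonempty_pi_zmod_addEquiv_primaryProduct {ι : Type*} [Countable ι] (n : ι → ℕ)
    (hn : ∀ i, n i ≠ 0)
    (hinf : ∀ q : ℕ, q.Prime → ∀ k ≠ 0, {i | (n i).factorization q = k}.Infinite) :
    Nonempty ((∀ i, ZMod (n i)) ≃+ PrimaryProduct) := by
  have fibers (q : Nat.Primes) (k : ℕ) :
      Nonempty (({i // (n i).factorization q = k} → ZMod ((q : ℕ) ^ k)) ≃+
        (ℕ → ZMod ((q : ℕ) ^ k))) := by
    refine nonempty_arrow_addEquiv_nat_arrow ?_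
    by_cases hk : k = 0
    · subst hk
      rw [pow_zero]
      exact Or.inr inferInstance
    · exact Or.inl (hinf q q.2 k hk).to_subtype
  exact ⟨(AddEquiv.piCongrRight fun i => (ZMod.equivPiPrimes (hn i)).toAddEquiv).trans <|
    (AddEquiv.piComm _).trans <|
    (AddEquiv.piCongrRight fun q : Nat.Primes =>
      AddEquiv.piEquivPiFibers (fun i => (n i).factorization q)
      fun k => ZMod ((q : ℕ) ^ k)).trans <|
    AddEquiv.piCongrRight fun q : Nat.Primes => AddEquiv.piCongrRight fun k => (fibers q k).some⟩

/-- The abelian group `∏_{m=1}^∞ ℤ/mℤ` is isomorphic to `∏_p 𝔽_p^×`, the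
product over all primes `p` of the multiplicative groups of the finite prime fields. -/
theorem statement4 :
    Nonempty ((∀ m : ℕ+, ZMod m) ≃+ Additive (∀ p : Nat.Primes, (ZMod p.1)ˣ)) := by
  obtain ⟨eN⟩ := nonempty_pi_zmod_addEquiv_primaryProduct (fun m : ℕ+ => (m : ℕ))
    (fun m => m.ne_zero) fun q hq k _ => PNat.infinite_setOf_factorization_eq hq k
  obtain ⟨eP⟩ := nonempty_pi_zmod_addEquiv_primaryProduct (fun p : Nat.Primes => (p : ℕ) - 1)
    (fun p => Nat.sub_ne_zero_of_lt p.2.one_lt)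
    fun q hq k hk => Nat.Primes.infinite_setOf_factorization_sub_one_eq hq hk
  have units (p : Nat.Primes) : Additive (ZMod p.1)ˣ ≃+ ZMod ((p : ℕ) - 1) :=
    have : Fact (p : ℕ).Prime := ⟨p.2⟩
    (nonempty_additive_units_addEquiv_zmod (ZMod p.1)).some.trans
      (ZMod.ringEquivCongr (by rw [Nat.card_zmod])).toAddEquiv
  exact ⟨eN.trans <| eP.symm.trans <|
    (AddEquiv.piCongrRight fun p => (units p).symm).trans (AddEquiv.piAdditive _).symm⟩
end

section
/- Let ℓ be a prime and G a subgroup of GL₂(ℤ_ℓ). For k ≥ 1 let π_k : GL₂(ℤ_ℓ) → GL₂(ℤ/ℓ^kℤ) denote the group homomorphism induced by reduction modulo ℓ^k. Let N ≥ 2 be an integer, and assume moreover N ≥ 3 in case ℓ = 2. If there exists g ∈ G with π_N(g) ≠ 1 and π_{N−1}(g) = 1, then for every integer k ≥ N there exists h ∈ G with π_k(h) ≠ 1 and π_{k−1}(h) = 1. -/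
lemma pow_entry_dvd {R : Type*} [CommRing R] (c : R) (X : Matrix (Fin 2) (Fin 2) R)
    (hX : ∀ i j, c ∣ X i j) : ∀ m : ℕ, ∀ i j, c ^ m ∣ (X ^ m) i j := by
  intro m
  induction m with
  | zero => intro i j; simp
  | succ m ih =>
    intro i j
    rw [pow_succ, pow_succ, Matrix.mul_apply]
    exact Finset.dvd_sum fun k _ => mul_dvd_mul (ih i k) (hX k j)

lemma key_step (ℓ : ℕ) [Fact ℓ.Prime] (n : ℕ) (hn : 2 ≤ n) (hn2 : ℓ = 2 → 3 ≤ n)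
    (M : Matrix (Fin 2) (Fin 2) ℤ_[ℓ])
    (h1 : ∀ i j, (ℓ : ℤ_[ℓ]) ^ (n - 1) ∣ (M - 1) i j)
    (h2 : ¬ ∀ i j, (ℓ : ℤ_[ℓ]) ^ n ∣ (M - 1) i j) :
    (∀ i j, (ℓ : ℤ_[ℓ]) ^ n ∣ (M ^ ℓ - 1) i j) ∧
      ¬ ∀ i j, (ℓ : ℤ_[ℓ]) ^ (n + 1) ∣ (M ^ ℓ - 1) i j := by
  have hℓ2 : 2 ≤ ℓ := (Fact.out : ℓ.Prime).two_le
  set X := M - 1 with hXdef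
  have hM : M = X + 1 := by rw [hXdef]; abel
  have hsplit : M ^ ℓ - 1 = X * (ℓ : Matrix (Fin 2) (Fin 2) ℤ_[ℓ]) +
      ∑ i ∈ Finset.Ico 2 (ℓ + 1),
        X ^ i * (ℓ.choose i : Matrix (Fin 2) (Fin 2) ℤ_[ℓ]) := by
    rw [hM, Commute.add_pow (Commute.one_right X), Finset.range_eq_Ico,
      Finset.sum_eq_sum_Ico_succ_bot (by omega : 0 < ℓ + 1),
      Finset.sum_eq_sum_Ico_succ_bot (by omega : 1 < ℓ + 1)]
    simp only [pow_zero, one_pow, one_mul, mul_one, Nat.choose_zero_right, Nat.cast_one,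
      Nat.choose_one_right, pow_one]
    abel
  have hXdvd : ∀ i j, (ℓ : ℤ_[ℓ]) ^ (n - 1) ∣ X i j := h1
  have htail : ∀ a b, (ℓ : ℤ_[ℓ]) ^ (n + 1) ∣
      (∑ i ∈ Finset.Ico 2 (ℓ + 1),
        X ^ i * (ℓ.choose i : Matrix (Fin 2) (Fin 2) ℤ_[ℓ])) a b := by
    intro a b
    rw [Matrix.sum_apply]
    refine Finset.dvd_sum fun i hi => ?_
    rw [Finset.mem_Ico] at hi
    rw [← Matrix.diagonal_natCast, Matrix.mul_diagonal]
    have hx : (ℓ : ℤ_[ℓ]) ^ ((n - 1) * i) ∣ (X ^ i) a b := by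
      have := pow_entry_dvd _ X hXdvd i a b
      rwa [← pow_mul] at this
    rcases lt_or_eq_of_le (Nat.lt_succ_iff.mp hi.2) with hlt | heq
    · -- 2 ≤ i < ℓ
      have hc : (ℓ : ℤ_[ℓ]) ∣ (ℓ.choose i : ℤ_[ℓ]) :=
        Nat.cast_dvd_cast ((Fact.out : ℓ.Prime).dvd_choose_self (by omega) hlt)
      have hmul : (ℓ : ℤ_[ℓ]) ^ ((n - 1) * i) * (ℓ : ℤ_[ℓ]) ∣
          (X ^ i) a b * (ℓ.choose i : ℤ_[ℓ]) := mul_dvd_mul hx hc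
      refine dvd_trans ?_ hmul
      rw [← pow_succ]
      refine pow_dvd_pow _ ?_
      have hmm : (n - 1) * 2 ≤ (n - 1) * i := Nat.mul_le_mul (le_refl (n - 1)) hi.1
      have hn' : n ≤ (n - 1) * 2 := by omega
      omega
    · -- i = ℓ
      refine dvd_trans (dvd_trans (pow_dvd_pow _ ?_) hx) (dvd_mul_right _ _)
      rcases eq_or_ne ℓ 2 with h | h
      · have h3 := hn2 h
        rw [heq, h]; omega
      · have hℓ3 : 3 ≤ ℓ := by omega
        have hmm : (n - 1) * 3 ≤ (n - 1) * i :=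
          Nat.mul_le_mul (le_refl (n - 1)) (heq ▸ hℓ3)
        have hn' : n + 1 ≤ (n - 1) * 3 := by omega
        exact le_trans hn' hmm
  constructor
  · intro a b
    rw [hsplit, Matrix.add_apply]
    refine dvd_add ?_ (dvd_trans (pow_dvd_pow _ (by omega)) (htail a b))
    rw [← Matrix.diagonal_natCast, Matrix.mul_diagonal]
    have : (ℓ : ℤ_[ℓ]) ^ (n - 1) * (ℓ : ℤ_[ℓ]) ∣ X a b * (ℓ : ℤ_[ℓ]) :=
      mul_dvd_mul (hXdvd a b) dvd_rfl
    refine dvd_trans ?_ this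
    rw [← pow_succ]
    exact pow_dvd_pow _ (by omega)
  · intro hcon
    apply h2
    intro a b
    have h1' := hcon a b
    rw [hsplit, Matrix.add_apply] at h1'
    have h2' : (ℓ : ℤ_[ℓ]) ^ (n + 1) ∣ (X * (ℓ : Matrix (Fin 2) (Fin 2) ℤ_[ℓ])) a b := by
      have := dvd_sub h1' (htail a b)
      simpa using this
    rw [← Matrix.diagonal_natCast, Matrix.mul_diagonal] at h2'
    have hℓne : (ℓ : ℤ_[ℓ]) ≠ 0 := by
      exact_mod_cast (Nat.cast_ne_zero (R := ℤ_[ℓ])).mpr (Fact.out : ℓ.Prime).ne_zero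
    rw [pow_succ, mul_comm ((ℓ : ℤ_[ℓ]) ^ n) _] at h2'
    exact (mul_dvd_mul_iff_left hℓne).mp (by rwa [mul_comm (X a b) _] at h2')

lemma gl_map_eq_one_iff (ℓ : ℕ) [Fact ℓ.Prime] (k : ℕ) (g : GL (Fin 2) ℤ_[ℓ]) :
    Matrix.GeneralLinearGroup.map (PadicInt.toZModPow (p := ℓ) k) g = 1 ↔
    ∀ i j, (ℓ : ℤ_[ℓ]) ^ k ∣ ((g : Matrix (Fin 2) (Fin 2) ℤ_[ℓ]) - 1) i j := by
  have hker : ∀ x : ℤ_[ℓ], PadicInt.toZModPow (p := ℓ) k x = 0 ↔ (ℓ : ℤ_[ℓ]) ^ k ∣ x := by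
    intro x
    rw [← RingHom.mem_ker, PadicInt.ker_toZModPow, Ideal.mem_span_singleton]
  rw [Matrix.GeneralLinearGroup.ext_iff]
  constructor
  · intro h i j
    have h' := h i j
    rw [Matrix.GeneralLinearGroup.map_apply] at h'
    rw [← hker, Matrix.sub_apply, map_sub, h']
    by_cases hij : i = j <;>
      simp [hij, Matrix.one_apply, Units.val_one]
  · intro h i j
    have h' := h i j
    rw [← hker, Matrix.sub_apply, map_sub, sub_eq_zero] at h'
    rw [Matrix.GeneralLinearGroup.map_apply, h']
    by_cases hij : i = j <;>
      simp [hij, Matrix.one_apply, Units.val_one]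

/-- Let `ℓ` be a prime and `G ≤ GL₂(ℤ_ℓ)`. For `k ≥ 1` let
`π_k : GL₂(ℤ_ℓ) → GL₂(ℤ/ℓ^kℤ)` be reduction modulo `ℓ^k`. Let `N ≥ 2`, with `N ≥ 3` if
`ℓ = 2`. If there is `g ∈ G` with `π_N(g) ≠ 1` and `π_{N-1}(g) = 1`, then for every `k ≥ N`
there is `h ∈ G` with `π_k(h) ≠ 1` and `π_{k-1}(h) = 1`. -/
theorem statement9 (ℓ : ℕ) [Fact ℓ.Prime] (G : Subgroup (GL (Fin 2) ℤ_[ℓ]))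
    (N : ℕ) (hN : 2 ≤ N) (hN2 : ℓ = 2 → 3 ≤ N)
    (hg : ∃ g ∈ G,
      Matrix.GeneralLinearGroup.map (PadicInt.toZModPow (p := ℓ) N) g ≠ 1 ∧
      Matrix.GeneralLinearGroup.map (PadicInt.toZModPow (p := ℓ) (N - 1)) g = 1) :
    ∀ k : ℕ, N ≤ k → ∃ h ∈ G,
      Matrix.GeneralLinearGroup.map (PadicInt.toZModPow (p := ℓ) k) h ≠ 1 ∧
      Matrix.GeneralLinearGroup.map (PadicInt.toZModPow (p := ℓ) (k - 1)) h = 1 := by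
  intro k hk
  induction k, hk using Nat.le_induction with
  | base => exact hg
  | succ k hk ih =>
    obtain ⟨h, hG, hne, heq⟩ := ih
    refine ⟨h ^ ℓ, pow_mem hG ℓ, ?_, ?_⟩
    · rw [Ne, gl_map_eq_one_iff]
      have hcoe : ((h ^ ℓ : GL (Fin 2) ℤ_[ℓ]) : Matrix (Fin 2) (Fin 2) ℤ_[ℓ]) =
          ((h : Matrix (Fin 2) (Fin 2) ℤ_[ℓ])) ^ ℓ := Units.val_pow_eq_pow_val h ℓ
      rw [hcoe]
      exact (key_step ℓ k (le_trans hN hk) (fun h2 => le_trans (hN2 h2) hk) _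
        ((gl_map_eq_one_iff ℓ (k - 1) h).mp heq)
        (fun hc => hne ((gl_map_eq_one_iff ℓ k h).mpr hc))).2
    · rw [gl_map_eq_one_iff]
      have hcoe : ((h ^ ℓ : GL (Fin 2) ℤ_[ℓ]) : Matrix (Fin 2) (Fin 2) ℤ_[ℓ]) =
          ((h : Matrix (Fin 2) (Fin 2) ℤ_[ℓ])) ^ ℓ := Units.val_pow_eq_pow_val h ℓ
      rw [hcoe]
      have := (key_step ℓ k (le_trans hN hk) (fun h2 => le_trans (hN2 h2) hk) _
        ((gl_map_eq_one_iff ℓ (k - 1) h).mp heq)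
        (fun hc => hne ((gl_map_eq_one_iff ℓ k h).mpr hc))).1
      simpa using this
end

section
/- Let ℓ be a prime and let s ∈ GL₂(𝔽_ℓ) be an element of order exactly ℓ. Then for every c ∈ GL₂(𝔽_ℓ) with c·s = s·c, the determinant det(c) is a square in 𝔽_ℓ^×. -/
/-!
In characteristic `ℓ`, `(s - 1) ^ ℓ = s ^ ℓ - 1 = 0`, so `N = s - 1` is a nonzero nilpotent
`2 × 2` matrix: `N = !![a, b; g, -a]` with `a ^ 2 + b * g = 0`. Writing out `c * N = N * c`
entrywise gives `det c * b ^ 2 = (c₀₀ * b - a * c₀₁) ^ 2`; if `b = 0`, transpose to swap `b` and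
`g`, which cannot both vanish.
-/

theorem isNilpotent_sub_one_of_pow_char_eq_one {R : Type*} [Ring R] (p : ℕ) [Fact p.Prime]
    [CharP R p] {x : R} (hx : x ^ p = 1) : IsNilpotent (x - 1) :=
  ⟨p, by rw [sub_pow_char_of_commute p (Commute.one_right x), hx, one_pow, sub_self]⟩

theorem Units.isSquare_of_isSquare_val {M : Type*} [CommMonoid M] {u : Mˣ}
    (h : IsSquare (u : M)) : IsSquare u := by
  obtain ⟨r, hr⟩ := h
  have hr_unit : IsUnit r := isUnit_of_mul_isUnit_left (hr ▸ u.isUnit)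
  exact ⟨hr_unit.unit, Units.ext hr⟩

namespace Matrix

theorem det_eq_zero_of_isNilpotent {n R : Type*} [DecidableEq n] [Fintype n] [Nonempty n]
    [CommRing R] [IsReduced R] {N : Matrix n n R} (hN : IsNilpotent N) : N.det = 0 := by
  obtain ⟨k, hk⟩ := hN
  exact IsNilpotent.eq_zero ⟨k, by rw [← det_pow, hk, det_zero]⟩

theorem det_mul_sq_eq_sq_of_commute {R : Type*} [CommRing R] {N C : Matrix (Fin 2) (Fin 2) R}
    (htr : N.trace = 0) (hdet : N.det = 0) (hC : Commute C N) :
    C.det * N 0 1 ^ 2 = (C 0 0 * N 0 1 - N 0 0 * C 0 1) ^ 2 := by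
  have e00 := congrFun (congrFun hC.eq 0) 0
  have e01 := congrFun (congrFun hC.eq 0) 1
  simp only [mul_apply, Fin.sum_univ_two] at e00 e01
  rw [trace_fin_two] at htr
  rw [det_fin_two] at hdet ⊢
  linear_combination (-(C 0 0 * N 0 1)) * e01 + (C 0 1 * N 0 1) * e00 + C 0 1 ^ 2 * hdet
    + (C 0 0 * C 0 1 * N 0 1 - C 0 1 ^ 2 * N 0 0) * htr

section Field

variable {K : Type*} [Field K] {N C : Matrix (Fin 2) (Fin 2) K}

theorem isSquare_det_of_commute_of_apply_zero_one_ne_zero (htr : N.trace = 0) (hdet : N.det = 0)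
    (hC : Commute C N) (h01 : N 0 1 ≠ 0) : IsSquare C.det :=
  ⟨(C 0 0 * N 0 1 - N 0 0 * C 0 1) / N 0 1, by
    rw [div_mul_div_comm, eq_div_iff (mul_ne_zero h01 h01), ← sq, ← sq,
      det_mul_sq_eq_sq_of_commute htr hdet hC]⟩

theorem isSquare_det_of_commute_of_isNilpotent (hN : IsNilpotent N) (hN0 : N ≠ 0)
    (hC : Commute C N) : IsSquare C.det := by
  have htr : N.trace = 0 := (isNilpotent_trace_of_isNilpotent hN).eq_zero
  have hdet : N.det = 0 := det_eq_zero_of_isNilpotent hN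
  by_cases h01 : N 0 1 = 0
  · by_cases h10 : N 1 0 = 0
    · refine absurd ?_ hN0
      rw [trace_fin_two] at htr
      rw [det_fin_two, h01, zero_mul, sub_zero] at hdet
      have h00 : N 0 0 = 0 := pow_eq_zero_iff two_ne_zero |>.mp <| by
        linear_combination N 0 0 * htr - hdet
      have h11 : N 1 1 = 0 := by linear_combination htr - h00
      ext i j
      fin_cases i <;> fin_cases j <;> assumption
    · have hCt : Commute Cᵀ Nᵀ := by
        simpa only [Commute, SemiconjBy, ← transpose_mul] using congrArg transpose hC.eq.symm
      rw [← det_transpose]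
      exact isSquare_det_of_commute_of_apply_zero_one_ne_zero (by rwa [trace_transpose])
        (by rwa [det_transpose]) hCt h10
  · exact isSquare_det_of_commute_of_apply_zero_one_ne_zero htr hdet hC h01

end Field

end Matrix

/-- Let `ℓ` be a prime and `s ∈ GL₂(𝔽_ℓ)` of order exactly `ℓ`. Then for
every `c ∈ GL₂(𝔽_ℓ)` commuting with `s`, the determinant of `c` is a square in `𝔽_ℓ^×`. -/
theorem statement11 (ℓ : ℕ) [Fact ℓ.Prime] (s : GL (Fin 2) (ZMod ℓ)) (hs : orderOf s = ℓ)
    (c : GL (Fin 2) (ZMod ℓ)) (hc : c * s = s * c) :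
    IsSquare (Matrix.GeneralLinearGroup.det c) := by
  have hN : IsNilpotent (s.val - 1) := isNilpotent_sub_one_of_pow_char_eq_one ℓ <| by
    simpa only [hs, Units.val_pow_eq_pow_val, Units.val_one] using
      congrArg Units.val (pow_orderOf_eq_one s)
  have hN0 : s.val - 1 ≠ 0 := by
    rw [sub_ne_zero, Ne, ← Units.val_one, Units.val_inj]
    rintro rfl
    exact (Fact.out : ℓ.Prime).one_lt.ne (hs ▸ orderOf_one).symm
  have hcN : Commute c.val (s.val - 1) := (Commute.units_val hc).sub_right (Commute.one_right _)
  apply Units.isSquare_of_isSquare_val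
  rw [Matrix.GeneralLinearGroup.val_det_apply]
  exact Matrix.isSquare_det_of_commute_of_isNilpotent hN hN0 hcN
end

section
/- Let ℓ be an odd prime and let G be a subgroup of GL₂(ℤ/ℓ²ℤ) such that the determinant map det : G → (ℤ/ℓ²ℤ)^× is surjective. Then the kernel of the reduction-mod-ℓ homomorphism G → GL₂(ℤ/ℓℤ) is nontrivial; that is, there exists g ∈ G with g ≠ 1 whose reduction modulo ℓ is the identity matrix. -/
/-!
Pick a unit `v` of `ℤ/ℓ²ℤ` whose reduction is a nonsquare of `𝔽_ℓ` and with `v ^ (ℓ² - 1) ≠ 1`: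
units with nonsquare reduction are stable under multiplication by `1 + ℓ`, and
`(1 + ℓ) ^ (ℓ² - 1) = 1 - ℓ ≠ 1`. Let `g ∈ G` have determinant `v`. The reduction `x` of `g` has
characteristic polynomial `T² - tT + a` with `a` a nonsquare, so its discriminant `t² - 4a` is
nonzero and its roots in `𝔽_{ℓ²}` are distinct and nonzero; hence `x ^ (ℓ² - 1) = 1`. So
`g ^ (ℓ² - 1)` lies in the kernel of reduction, and it is not `1` because its determinant is not.
-/

open Polynomial

theorem Polynomial.X_sub_C_mul_X_sub_C_dvd_X_pow_sub_one {K : Type*} [Field K] {x y : K}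
    (hxy : x ≠ y) {m : ℕ} (hx : x ^ m = 1) (hy : y ^ m = 1) :
    (X - C x) * (X - C y) ∣ X ^ m - 1 :=
  (isCoprime_X_sub_C_of_isUnit_sub (sub_ne_zero.2 hxy).isUnit).mul_dvd
    (dvd_iff_isRoot.2 (by simp [hx])) (dvd_iff_isRoot.2 (by simp [hy]))

theorem sq_sub_four_mul_ne_zero_of_not_isSquare {F : Type*} [Field F] [NeZero (2 : F)] (t : F)
    {a : F} (ha : ¬IsSquare a) : t ^ 2 - 4 * a ≠ 0 := by
  intro h
  exact ha ⟨t / 2, by field_simp; linear_combination -h⟩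

section QuadraticExtension

variable {F K : Type*} [Field F] [Fintype F] [Field K] [Fintype K] [Algebra F K]

theorem isSquare_algebraMap_of_card_eq_sq (hF : ringChar F ≠ 2)
    (hK : Fintype.card K = Fintype.card F ^ 2) (x : F) : IsSquare (algebraMap F K x) := by
  rcases eq_or_ne x 0 with rfl | hx
  · simp
  have hK2 : ringChar K ≠ 2 := Algebra.ringChar_eq F K ▸ hF
  obtain ⟨j, hj⟩ : Odd (Fintype.card F) := Nat.odd_iff.2 (FiniteField.odd_card_of_char_ne_two hF)
  have hexp : Fintype.card K / 2 = (Fintype.card F - 1) * (j + 1) := by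
    rw [hK, hj, Nat.add_sub_cancel, show (2 * j + 1) ^ 2 = 2 * (2 * j * (j + 1)) + 1 by ring]
    omega
  rw [FiniteField.isSquare_iff hK2 (by simpa using hx), hexp, pow_mul, ← map_pow,
    FiniteField.pow_card_sub_one_eq_one x hx, map_one, one_pow]

theorem X_sq_sub_C_mul_X_add_C_dvd_X_pow_sub_one (hF : ringChar F ≠ 2)
    (hK : Fintype.card K = Fintype.card F ^ 2) {t a : F} (ha : a ≠ 0)
    (hdisc : t ^ 2 - 4 * a ≠ 0) :
    X ^ 2 - C t * X + C a ∣ (X ^ (Fintype.card F ^ 2 - 1) - 1 : F[X]) := by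
  have : NeZero (2 : K) := ⟨by simpa using Ring.two_ne_zero (Algebra.ringChar_eq F K ▸ hF)⟩
  obtain ⟨s, hs⟩ := isSquare_algebraMap_of_card_eq_sq (K := K) hF hK (t ^ 2 - 4 * a)
  obtain ⟨x, hx⟩ := exists_quadratic_eq_zero (K := K) one_ne_zero
    (b := -algebraMap F K t) (c := algebraMap F K a)
    ⟨s, by rw [discrim, ← hs, map_sub, map_mul, map_pow, map_ofNat]; ring⟩
  obtain ⟨y, hy⟩ : ∃ y, y = algebraMap F K t - x := ⟨_, rfl⟩
  have hsum : algebraMap F K t = x + y := by rw [hy]; ring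
  have hprod : algebraMap F K a = x * y := by rw [hy]; linear_combination hx
  have hxy : x ≠ y := by
    intro h
    apply hdisc
    apply (algebraMap F K).injective
    simp only [map_sub, map_mul, map_pow, map_ofNat, map_zero, hsum, hprod, h]
    ring
  have hxy0 : x * y ≠ 0 := hprod ▸ (_root_.map_ne_zero _).2 ha
  have hfactor : (X ^ 2 - C t * X + C a).map (algebraMap F K) = (X - C x) * (X - C y) := by
    simp only [Polynomial.map_add, Polynomial.map_sub, Polynomial.map_mul, map_X, map_C,
      Polynomial.map_pow, hsum, hprod, C_add, C_mul]
    ring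
  rw [← map_dvd_map _ (algebraMap F K).injective (by monicity!), hfactor]
  simpa [← hK] using X_sub_C_mul_X_sub_C_dvd_X_pow_sub_one hxy
    (FiniteField.pow_card_sub_one_eq_one x (left_ne_zero_of_mul hxy0))
    (FiniteField.pow_card_sub_one_eq_one y (right_ne_zero_of_mul hxy0))

end QuadraticExtension

theorem Matrix.pow_sq_sub_one_eq_one_of_not_isSquare_det {p : ℕ} [Fact p.Prime] (hp : p ≠ 2)
    (M : Matrix (Fin 2) (Fin 2) (ZMod p)) (hM : ¬IsSquare M.det) : M ^ (p ^ 2 - 1) = 1 := by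
  have hchar : ringChar (ZMod p) ≠ 2 := by rwa [ZMod.ringChar_zmod_n]
  have : NeZero (2 : ZMod p) := ⟨Ring.two_ne_zero hchar⟩
  let _ := Fintype.ofFinite (GaloisField p 2)
  have hK : Fintype.card (GaloisField p 2) = Fintype.card (ZMod p) ^ 2 := by
    rw [ZMod.card, ← Nat.card_eq_fintype_card, GaloisField.card p 2 two_ne_zero]
  have hdvd := X_sq_sub_C_mul_X_add_C_dvd_X_pow_sub_one hchar hK
    (fun h => hM (by rw [h]; exact IsSquare.zero))
    (sq_sub_four_mul_ne_zero_of_not_isSquare M.trace hM)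
  rw [← charpoly_fin_two, ZMod.card] at hdvd
  simpa [sub_eq_zero] using aeval_eq_zero_of_dvd_aeval_eq_zero hdvd M.aeval_self_charpoly

theorem ZMod.one_add_pow_eq_one_iff {p : ℕ} (hp : p ≠ 0) (k : ℕ) :
    (1 + (p : ZMod (p ^ 2))) ^ k = 1 ↔ p ∣ k := by
  have hsq : (p : ZMod (p ^ 2)) ^ 2 = 0 := by rw [← Nat.cast_pow, ZMod.natCast_self]
  have hpow := eval_add_of_sq_eq_zero (X ^ k) 1 _ hsq
  simp only [eval_pow, eval_X, one_pow, derivative_X_pow, map_natCast, eval_mul, eval_natCast,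
    mul_one] at hpow
  rw [hpow, add_eq_left, ← Nat.cast_mul, ZMod.natCast_eq_zero_iff, sq,
    Nat.mul_dvd_mul_iff_right (Nat.pos_of_ne_zero hp)]

theorem ZMod.exists_unit_not_isSquare_castHom_pow_ne_one {p : ℕ} [Fact p.Prime] (hp : p ≠ 2) :
    ∃ v : (ZMod (p ^ 2))ˣ, ¬IsSquare (ZMod.castHom (dvd_pow_self p two_ne_zero) (ZMod p) v) ∧
      v ^ (p ^ 2 - 1) ≠ 1 := by
  have hp0 := (Fact.out : p.Prime).ne_zero
  set φ := ZMod.castHom (dvd_pow_self p two_ne_zero) (ZMod p)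
  obtain ⟨a, ha⟩ := FiniteField.exists_nonsquare (F := ZMod p) (by rwa [ZMod.ringChar_zmod_n])
  have ha0 : a ≠ 0 := by rintro rfl; exact ha IsSquare.zero
  obtain ⟨u, hu⟩ := ZMod.unitsMap_surjective (dvd_pow_self p two_ne_zero) (Units.mk0 a ha0)
  have hua : φ u = a := by simpa [Units.ext_iff, ZMod.unitsMap_def, φ] using hu
  let w : (ZMod (p ^ 2))ˣ := ZMod.unitOfCoprime (1 + p) (Nat.Coprime.pow_right 2 (by simp))
  have hw : (w : ZMod (p ^ 2)) = 1 + p := by simp [w]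
  have hφw : φ w = 1 := by simp [hw, φ]
  have hwpow : w ^ (p ^ 2 - 1) ≠ 1 := by
    rw [Ne, Units.ext_iff, Units.val_pow_eq_pow_val, hw, Units.val_one,
      ZMod.one_add_pow_eq_one_iff hp0]
    intro h
    have h1 : p ∣ 1 := by
      simpa [Nat.sub_sub_self (Nat.one_le_pow _ _ (Nat.pos_of_ne_zero hp0))] using
        Nat.dvd_sub (dvd_pow_self p two_ne_zero) h
    exact (Fact.out : p.Prime).one_lt.ne' (Nat.dvd_one.1 h1)
  by_cases hupow : u ^ (p ^ 2 - 1) = 1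
  · exact ⟨u * w, by simpa [hua, hφw] using ha, by rwa [mul_pow, hupow, one_mul]⟩
  · exact ⟨u, by rwa [hua], hupow⟩

/-- Let `ℓ` be an odd prime and `G ≤ GL₂(ℤ/ℓ²ℤ)` a subgroup on which the
determinant map `det : G → (ℤ/ℓ²ℤ)^×` is surjective. Then the kernel of the reduction-mod-`ℓ`
homomorphism `G → GL₂(ℤ/ℓℤ)` is nontrivial: there is `g ∈ G`, `g ≠ 1`, reducing to the
identity modulo `ℓ`. -/
theorem statement12 (ℓ : ℕ) (hℓ : ℓ.Prime) (hodd : Odd ℓ)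
    (G : Subgroup (GL (Fin 2) (ZMod (ℓ ^ 2))))
    (hdet : ∀ u : (ZMod (ℓ ^ 2))ˣ, ∃ g ∈ G, Matrix.GeneralLinearGroup.det g = u) :
    ∃ g ∈ G, g ≠ 1 ∧
      Matrix.GeneralLinearGroup.map
        (ZMod.castHom (dvd_pow_self ℓ two_ne_zero) (ZMod ℓ)) g = 1 := by
  have : Fact ℓ.Prime := ⟨hℓ⟩
  have hℓ2 : ℓ ≠ 2 := by rintro rfl; norm_num at hodd
  obtain ⟨v, hv, hvpow⟩ := ZMod.exists_unit_not_isSquare_castHom_pow_ne_one hℓ2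
  obtain ⟨g, hg, rfl⟩ := hdet v
  refine ⟨g ^ (ℓ ^ 2 - 1), pow_mem hg _, fun h => hvpow (by rw [← map_pow, h, map_one]), ?_⟩
  rw [map_pow]
  ext1
  refine Matrix.pow_sq_sub_one_eq_one_of_not_isSquare_det hℓ2 _ ?_
  rwa [← Matrix.GeneralLinearGroup.val_det_apply, Matrix.GeneralLinearGroup.map_det, Units.coe_map]
end

section
/- For every nonzero rational number r, the elliptic curve E_r over ℚ satisfies Z_{E_r/ℚ}(2) = Z_{E_r/ℚ}(4) = ℚ(i), where ℚ(i) denotes the subfield of the fixed algebraic closure of ℚ generated over ℚ by an element i with i² = −1. -/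
/-!
Over `ℚ(i)` the curve `E_r` is `y² = x(x - α²)(x - β²)` with `α = 1 + 2ir²`, `β = 1 - 2ir²`, and
`α² - β² = 8ir² = γ²` for `γ = 2(1 + i)r`. The 2-torsion abscissa `α² = 1 - 4r⁴ + 4ir²` already
generates `ℚ(i)`, since `r ≠ 0`. Conversely, if `2P = (e, 0)` for a root `e` of the cubic `c`,
the duplication formula gives `(x(P) - e)² = c'(e)`, which is one of `(αβ)²`, `(αγ)²`, `(iβγ)²`;
so `x(P) ∈ ℚ(i)`, and then `y(P)² = (e - e')(x(P) - e'')²` is again a square in `ℚ(i)`.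
-/

/-- The Weierstrass curve `E_r : y² = x(x² − 2(1−4r⁴)x + (1+4r⁴)²)` over `ℚ`. -/
def Er (r : ℚ) : WeierstrassCurve ℚ :=
  { a₁ := 0, a₂ := -2 * (1 - 4 * r ^ 4), a₃ := 0, a₄ := (1 + 4 * r ^ 4) ^ 2, a₆ := 0 }

open Classical in
/-- The `m`-division field `Z_{E/K}(m)` of an elliptic curve `E` over a field `K` of
characteristic zero: the subfield of a fixed algebraic closure `K̄` of `K` generated over `K`
by the `x`- and `y`-coordinates of all affine points `P ∈ E(K̄)` with `m • P = 0`. -/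
noncomputable def divisionField {K : Type*} [Field K] (E : WeierstrassCurve K) (m : ℕ) :
    IntermediateField K (AlgebraicClosure K) :=
  IntermediateField.adjoin K
    {c : AlgebraicClosure K | ∃ (x y : AlgebraicClosure K)
      (h : (E.baseChange (AlgebraicClosure K)).toAffine.Nonsingular x y),
      m • (WeierstrassCurve.Affine.Point.some x y h) =
        (0 : (E.baseChange (AlgebraicClosure K)).toAffine.Point) ∧ (c = x ∨ c = y)}

open WeierstrassCurve WeierstrassCurve.Affine IntermediateField

section DivisionField

variable {K : Type*} [Field K] {E : WeierstrassCurve K}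

open Classical in
theorem mem_divisionField {m : ℕ} {x y : AlgebraicClosure K}
    {h : (E.baseChange (AlgebraicClosure K)).toAffine.Nonsingular x y}
    (hm : m • Point.some x y h = 0) :
    x ∈ divisionField E m ∧ y ∈ divisionField E m :=
  ⟨subset_adjoin K _ ⟨x, y, h, hm, Or.inl rfl⟩, subset_adjoin K _ ⟨x, y, h, hm, Or.inr rfl⟩⟩

open Classical in
theorem divisionField_le_iff {m : ℕ} {L : IntermediateField K (AlgebraicClosure K)} :
    divisionField E m ≤ L ↔
      ∀ x y (h : (E.baseChange (AlgebraicClosure K)).toAffine.Nonsingular x y),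
        m • Point.some x y h = 0 → x ∈ L ∧ y ∈ L := by
  refine ⟨fun hL x y h hm => ⟨hL (mem_divisionField hm).1, hL (mem_divisionField hm).2⟩,
    fun hL => ?_⟩
  rw [divisionField, adjoin_le_iff]
  rintro c ⟨x, y, h, hm, hc | hc⟩
  exacts [hc ▸ (hL x y h hm).1, hc ▸ (hL x y h hm).2]

theorem divisionField_mono {m n : ℕ} (hmn : m ∣ n) : divisionField E m ≤ divisionField E n := by
  classical
  obtain ⟨k, rfl⟩ := hmn
  refine divisionField_le_iff.2 fun x y h hm => mem_divisionField (h := h) ?_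
  rw [mul_nsmul, hm, nsmul_zero]

end DivisionField

section ShortWeierstrass

variable {F : Type*} [Field F] [NeZero (2 : F)] {W : WeierstrassCurve F} {x y : F}

theorem self_eq_negY_iff (h₁ : W.a₁ = 0) (h₃ : W.a₃ = 0) :
    y = W.toAffine.negY x y ↔ y = 0 := by
  rw [negY, h₁, h₃]
  constructor <;> intro hy
  · exact (mul_eq_zero.1 (by linear_combination hy : (2 : F) * y = 0)).resolve_left two_ne_zero
  · rw [hy]; ring

variable [DecidableEq F]

theorem two_nsmul_some_eq_zero_iff (h₁ : W.a₁ = 0) (h₃ : W.a₃ = 0)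
    (h : W.toAffine.Nonsingular x y) : 2 • Point.some x y h = 0 ↔ y = 0 := by
  rw [two_smul, ← self_eq_negY_iff h₁ h₃]
  by_cases hy : y = W.toAffine.negY x y
  · rw [Point.add_self_of_Y_eq hy]
    exact iff_of_true rfl hy
  · rw [Point.add_self_of_Y_ne hy]
    exact iff_of_false (Point.some_ne_zero _) hy

/-- The duplication formula `x(2P) - e = ((x - e)² - c'(e))² / (2y)²`, valid at every root `e` of
the cubic `c(X) = X³ + a₂X² + a₄X + a₆`. -/
theorem addX_slope_sub_mul_sq (h₁ : W.a₁ = 0) (h₃ : W.a₃ = 0) (hxy : W.toAffine.Equation x y)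
    (hy : y ≠ 0) {e : F} (he : W.toAffine.Equation e 0) :
    (W.toAffine.addX x x (W.toAffine.slope x x y y) - e) * (2 * y) ^ 2 =
      ((x - e) ^ 2 - (3 * e ^ 2 + 2 * W.a₂ * e + W.a₄)) ^ 2 := by
  have hY : y ≠ W.toAffine.negY x y := (self_eq_negY_iff h₁ h₃).not.2 hy
  have hl : W.toAffine.slope x x y y * (2 * y) = 3 * x ^ 2 + 2 * W.a₂ * x + W.a₄ := by
    rw [slope_of_Y_ne rfl hY, negY, h₁, h₃, show y - (-y - 0 * x - 0) = 2 * y by ring,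
      div_mul_cancel₀ _ (mul_ne_zero two_ne_zero hy)]
    ring
  rw [equation_iff, h₁, h₃] at hxy he
  rw [addX, h₁]
  linear_combination
    (W.toAffine.slope x x y y * (2 * y) + 3 * x ^ 2 + 2 * W.a₂ * x + W.a₄) * hl
      - 4 * (W.a₂ + 2 * x + e) * hxy + 4 * (W.a₂ + 2 * x + e) * he

theorem eq_zero_or_exists_sq_of_four_nsmul_eq_zero (h₁ : W.a₁ = 0) (h₃ : W.a₃ = 0)
    {h : W.toAffine.Nonsingular x y} (h4 : 4 • Point.some x y h = 0) :
    y = 0 ∨ ∃ e, W.toAffine.Equation e 0 ∧ (x - e) ^ 2 = 3 * e ^ 2 + 2 * W.a₂ * e + W.a₄ := by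
  refine or_iff_not_imp_left.2 fun hy => ?_
  have hY : y ≠ W.toAffine.negY x y := (self_eq_negY_iff h₁ h₃).not.2 hy
  have h2 := nonsingular_add h h fun hxy => hY hxy.2
  have h2P : 2 • Point.some x y h = Point.some _ _ h2 := by
    rw [two_smul, Point.add_self_of_Y_ne hY]
  have hy₂ := (two_nsmul_some_eq_zero_iff h₁ h₃ h2).1 (by rw [← h2P, ← mul_nsmul]; exact h4)
  have he := h2.1
  rw [hy₂] at he
  refine ⟨_, he, ?_⟩
  have hsq := addX_slope_sub_mul_sq h₁ h₃ h.1 hy he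
  rwa [sub_self, zero_mul, eq_comm, sq_eq_zero_iff, sub_eq_zero] at hsq

end ShortWeierstrass

section SquaresCurve

variable {F : Type*} [Field F] {α β x y : F}

/-- `y² = x(x - α²)(x - β²)` -/
def squaresCurve (α β : F) : WeierstrassCurve F :=
  { a₁ := 0, a₂ := -(α ^ 2 + β ^ 2), a₃ := 0, a₄ := α ^ 2 * β ^ 2, a₆ := 0 }

theorem squaresCurve_equation_iff :
    (squaresCurve α β).toAffine.Equation x y ↔ y ^ 2 = x * (x - α ^ 2) * (x - β ^ 2) := by
  rw [equation_iff]
  simp only [squaresCurve]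
  constructor <;> intro h <;> linear_combination h

theorem squaresCurve_equation_zero_iff :
    (squaresCurve α β).toAffine.Equation x 0 ↔ x = 0 ∨ x = α ^ 2 ∨ x = β ^ 2 := by
  rw [squaresCurve_equation_iff, zero_pow two_ne_zero, eq_comm, mul_eq_zero, mul_eq_zero,
    sub_eq_zero, sub_eq_zero, or_assoc]

theorem squaresCurve_nonsingular_sq_zero (hα : α ≠ 0) (hαβ : α ^ 2 ≠ β ^ 2) :
    (squaresCurve α β).toAffine.Nonsingular (α ^ 2) 0 := by
  refine (nonsingular_iff _ _).2
    ⟨squaresCurve_equation_zero_iff.2 (Or.inr (Or.inl rfl)), Or.inl fun h => ?_⟩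
  simp only [squaresCurve] at h
  rcases mul_eq_zero.1 (by linear_combination -h : α ^ 2 * (α ^ 2 - β ^ 2) = 0) with h' | h'
  exacts [hα (pow_eq_zero_iff two_ne_zero |>.1 h'), hαβ (sub_eq_zero.1 h')]

theorem mem_of_sq_eq_sq {S : Type*} [SetLike S F] [SubringClass S F] {L : S} {s : F}
    (hs : s ∈ L) (h : y ^ 2 = s ^ 2) : y ∈ L := by
  rcases sq_eq_sq_iff_eq_or_eq_neg.1 h with rfl | rfl
  exacts [hs, neg_mem hs]

theorem squaresCurve_mem_of_four_nsmul_eq_zero [DecidableEq F] [NeZero (2 : F)]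
    {S : Type*} [SetLike S F] [SubringClass S F] {L : S} {γ i : F}
    (hαL : α ∈ L) (hβL : β ∈ L) (hγL : γ ∈ L) (hiL : i ∈ L)
    (hγ : γ ^ 2 = α ^ 2 - β ^ 2) (hi : i ^ 2 = -1)
    {h : (squaresCurve α β).toAffine.Nonsingular x y} (h4 : 4 • Point.some x y h = 0) :
    x ∈ L ∧ y ∈ L := by
  have hxy := squaresCurve_equation_iff.1 h.1
  rcases eq_zero_or_exists_sq_of_four_nsmul_eq_zero rfl rfl h4 with rfl | ⟨e, he, hx⟩
  · refine ⟨?_, zero_mem L⟩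
    rcases squaresCurve_equation_zero_iff.1 h.1 with rfl | rfl | rfl
    exacts [zero_mem L, pow_mem hαL 2, pow_mem hβL 2]
  simp only [squaresCurve] at hx
  -- On the branch through the root `e`, `y² = (e - e')(x - e'')²` for the other roots `e', e''`.
  rcases squaresCurve_equation_zero_iff.1 he with rfl | rfl | rfl
  · have hxL : x ∈ L := mem_of_sq_eq_sq (mul_mem hαL hβL) (by linear_combination hx)
    refine ⟨hxL, mem_of_sq_eq_sq (s := i * α * (x - β ^ 2))
      (mul_mem (mul_mem hiL hαL) (sub_mem hxL (pow_mem hβL 2))) ?_⟩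
    linear_combination hxy - α ^ 2 * (x - β ^ 2) ^ 2 * hi + (x - β ^ 2) * hx
  · have hxL : x ∈ L := by
      rw [← sub_add_cancel x (α ^ 2)]
      refine add_mem (mem_of_sq_eq_sq (mul_mem hαL hγL) ?_) (pow_mem hαL 2)
      linear_combination hx - α ^ 2 * hγ
    refine ⟨hxL, mem_of_sq_eq_sq (s := α * (x - β ^ 2))
      (mul_mem hαL (sub_mem hxL (pow_mem hβL 2))) ?_⟩
    linear_combination hxy + (x - β ^ 2) * hx
  · have hxL : x ∈ L := by
      rw [← sub_add_cancel x (β ^ 2)]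
      refine add_mem (mem_of_sq_eq_sq (mul_mem (mul_mem hiL hβL) hγL) ?_) (pow_mem hβL 2)
      linear_combination hx - β ^ 2 * γ ^ 2 * hi + β ^ 2 * hγ
    refine ⟨hxL, mem_of_sq_eq_sq (s := β * (x - α ^ 2))
      (mul_mem hβL (sub_mem hxL (pow_mem hαL 2))) ?_⟩
    linear_combination hxy + (x - α ^ 2) * hx

end SquaresCurve

theorem Er_baseChange {F : Type*} [Field F] [Algebra ℚ F] {i : F} (hi : i ^ 2 = -1) (r : ℚ) :
    (Er r).baseChange F =
      squaresCurve (1 + 2 * i * algebraMap ℚ F r ^ 2) (1 - 2 * i * algebraMap ℚ F r ^ 2) := by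
  set p := algebraMap ℚ F r
  ext <;> simp only [Er, squaresCurve, WeierstrassCurve.baseChange, map_a₁, map_a₂, map_a₃,
    map_a₄, map_a₆, map_zero, map_add, map_sub, map_mul, map_neg, map_pow, map_one, map_ofNat]
  · linear_combination 8 * p ^ 4 * hi
  · linear_combination 4 * p ^ 4 * (2 + 4 * p ^ 4 - 4 * i ^ 2 * p ^ 4) * hi

open Classical in
theorem divisionField_Er_four_le (r : ℚ) {i : AlgebraicClosure ℚ} (hi : i ^ 2 = -1)
    {L : IntermediateField ℚ (AlgebraicClosure ℚ)} (hiL : i ∈ L) :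
    divisionField (Er r) 4 ≤ L := by
  set p := algebraMap ℚ (AlgebraicClosure ℚ) r
  have hpL : p ∈ L := L.algebraMap_mem r
  have h2L : (2 : AlgebraicClosure ℚ) ∈ L := ofNat_mem L 2
  -- Stated for an arbitrary `W` so that `Er_baseChange` can be applied without rewriting
  -- inside the dependent type of points.
  have key : ∀ W, W = squaresCurve (1 + 2 * i * p ^ 2) (1 - 2 * i * p ^ 2) →
      ∀ x y (h : W.toAffine.Nonsingular x y), 4 • Point.some x y h = 0 → x ∈ L ∧ y ∈ L := by
    rintro W rfl x y h h4
    refine squaresCurve_mem_of_four_nsmul_eq_zero (γ := 2 * (1 + i) * p) ?_ ?_ ?_ hiL ?_ hi h4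
    · exact add_mem (one_mem L) (mul_mem (mul_mem h2L hiL) (pow_mem hpL 2))
    · exact sub_mem (one_mem L) (mul_mem (mul_mem h2L hiL) (pow_mem hpL 2))
    · exact mul_mem (mul_mem h2L (add_mem (one_mem L) hiL)) hpL
    · linear_combination 4 * p ^ 2 * hi
  exact divisionField_le_iff.2 (key _ (Er_baseChange hi r))

open Classical in
theorem mem_divisionField_Er_two {r : ℚ} (hr : r ≠ 0) {i : AlgebraicClosure ℚ}
    (hi : i ^ 2 = -1) : i ∈ divisionField (Er r) 2 := by
  set p := algebraMap ℚ (AlgebraicClosure ℚ) r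
  set α := 1 + 2 * i * p ^ 2
  set β := 1 - 2 * i * p ^ 2
  have hp : p ≠ 0 := (map_ne_zero _).2 hr
  have hi0 : i ≠ 0 := by rintro rfl; norm_num at hi
  have hα : α ≠ 0 := by
    intro h
    have h' : algebraMap ℚ (AlgebraicClosure ℚ) (1 + 4 * r ^ 4) = 0 := by
      simp only [map_add, map_mul, map_pow, map_one, map_ofNat]
      linear_combination β * h + 4 * p ^ 4 * hi
    exact (by positivity : (1 + 4 * r ^ 4 : ℚ) ≠ 0) ((map_eq_zero _).1 h')
  have hαβ : α ^ 2 ≠ β ^ 2 := by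
    rw [ne_eq, ← sub_eq_zero, show α ^ 2 - β ^ 2 = 8 * i * p ^ 2 by ring]
    exact mul_ne_zero (mul_ne_zero (by norm_num) hi0) (pow_ne_zero 2 hp)
  have key : ∀ W, W = squaresCurve α β →
      ∃ h : W.toAffine.Nonsingular (α ^ 2) 0, 2 • Point.some _ _ h = 0 := by
    rintro W rfl
    exact ⟨squaresCurve_nonsingular_sq_zero hα hαβ, (two_nsmul_some_eq_zero_iff rfl rfl _).2 rfl⟩
  obtain ⟨h, h2⟩ := key _ (Er_baseChange hi r)
  have hα2 : α ^ 2 ∈ divisionField (Er r) 2 := (mem_divisionField h2).1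
  have hi_eq : i = (α ^ 2 - algebraMap ℚ _ (1 - 4 * r ^ 4)) / algebraMap ℚ _ (4 * r ^ 2) := by
    rw [eq_div_iff (by simpa using hr)]
    simp only [map_sub, map_mul, map_pow, map_one, map_ofNat]
    linear_combination -4 * p ^ 4 * hi
  rw [hi_eq]
  exact div_mem (sub_mem hα2 (_root_.algebraMap_mem _ _)) (_root_.algebraMap_mem _ _)

/-- For every nonzero rational `r`, the elliptic curve `E_r` over `ℚ`
satisfies `Z_{E_r/ℚ}(2) = Z_{E_r/ℚ}(4) = ℚ(i)`, where `i` is an element of the fixed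
algebraic closure of `ℚ` with `i² = −1`. -/
theorem statement15 (r : ℚ) (hr : r ≠ 0) (i : AlgebraicClosure ℚ) (hi : i ^ 2 = -1) :
    divisionField (Er r) 2 = IntermediateField.adjoin ℚ {i} ∧
    divisionField (Er r) 4 = IntermediateField.adjoin ℚ {i} := by
  have h4 : divisionField (Er r) 4 ≤ adjoin ℚ {i} :=
    divisionField_Er_four_le r hi (mem_adjoin_simple_self ℚ i)
  have h2 : adjoin ℚ {i} ≤ divisionField (Er r) 2 :=
    adjoin_simple_le_iff.2 (mem_divisionField_Er_two hr hi)
  have h24 : divisionField (Er r) 2 ≤ divisionField (Er r) 4 := divisionField_mono (by norm_num)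
  exact ⟨le_antisymm (h24.trans h4) h2, le_antisymm h4 (h2.trans h24)⟩
end
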